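/- arXiv:2209.14401 — 12 statements merged into one kernel-verified Lean document; each statement's English description precedes it below -/
import Mathlib

section
/- Let G be a connected proper interval graph on Fin n given by intervals. For any three vertices a, b, c with l a < l b < l c, one has G.dist a b ≤ G.dist a c and G.dist b c ≤ G.dist a c. -/
/-- In a connected proper interval graph, for vertices sorted by left endpoint
`l a < l b < l c`, we have `dist a b ≤ dist a c` and `dist b c ≤ dist a c`. -/
theorem stmt_0 {n : ℕ} (l r : Fin n → ℝ) (G : SimpleGraph (Fin n))
    (hlr : ∀ v, l v ≤ r v)
    (hadj : ∀ u v : Fin n, G.Adj u v ↔ u ≠ v ∧ l u ≤ r v ∧ l v ≤ r u)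
    (hproper : ∀ u v : Fin n, l u < l v ↔ r u < r v)
    (hdistinct : Function.Injective (Sum.elim l r : Fin n ⊕ Fin n → ℝ))
    (hconn : G.Connected)
    (a b c : Fin n) (hab : l a < l b) (hbc : l b < l c) :
    G.dist a b ≤ G.dist a c ∧ G.dist b c ≤ G.dist a c := by
  have linj : Function.Injective l := by
    intro u v h
    have : (Sum.inl u : Fin n ⊕ Fin n) = Sum.inl v := hdistinct (by simpa using h)
    simpa using this
  have key : ∀ (x y : Fin n) (p : G.Walk x y), l x < l b → l b < l y →
      G.dist x b ≤ p.length ∧ G.dist b y ≤ p.length := by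
    intro x y p
    induction p with
    | nil => intro h1 h2; exact absurd (h1.trans h2) (lt_irrefl _)
    | @cons x w y h q ih =>
      intro h1 h2
      obtain ⟨hxw, hxr, hwr⟩ := (hadj x w).mp h
      rcases lt_trichotomy (l b) (l w) with hbw | hbw | hbw
      · -- b is adjacent to both x and w
        have hbx : G.Adj x b := by
          refine (hadj x b).mpr ⟨fun he => absurd (he ▸ h1) (lt_irrefl _), ?_, ?_⟩
          · exact h1.le.trans (hlr b)
          · exact le_trans (le_of_lt (lt_of_lt_of_le hbw hwr)) le_rfl
        have hbw' : G.Adj b w := by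
          refine (hadj b w).mpr ⟨fun he => absurd (he ▸ hbw) (lt_irrefl _), ?_, ?_⟩
          · exact le_of_lt (lt_of_le_of_lt (hlr b) ((hproper b w).mp hbw))
          · have : r x < r b := (hproper x b).mp h1
            exact le_of_lt (lt_of_le_of_lt hwr this)
        constructor
        · have := G.dist_le (SimpleGraph.Walk.cons hbx SimpleGraph.Walk.nil)
          simpa using this.trans (by simp [Nat.succ_le_succ])
        · have := G.dist_le (SimpleGraph.Walk.cons hbw' q)
          simpa using this
      · -- b = w
        have hb : b = w := linj hbw
        subst hb
        constructor
        · have := G.dist_le (SimpleGraph.Walk.cons h SimpleGraph.Walk.nil)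
          simpa using this.trans (by simp [Nat.succ_le_succ])
        · have := G.dist_le q
          simpa using this.trans (Nat.le_succ _)
      · -- recurse
        obtain ⟨ihb, ihy⟩ := ih hbw h2
        constructor
        · obtain ⟨q', hq'⟩ := (hconn w b).exists_walk_length_eq_dist
          simp only [SimpleGraph.Walk.length_cons]
          have hd := G.dist_le (SimpleGraph.Walk.cons h q')
          simp only [SimpleGraph.Walk.length_cons] at hd
          rw [hq'] at hd
          omega
        · exact ihy.trans (Nat.le_succ _)
  obtain ⟨p, hp⟩ := (hconn a c).exists_walk_length_eq_dist
  obtain ⟨h1, h2⟩ := key a c p hab hbc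
  rw [hp] at h1 h2
  exact ⟨h1, h2⟩
end

section
/- Let G be a connected interval graph on Fin n given by intervals. For any three vertices a, b, c with l a < l b < l c, one has G.dist a b ≤ G.dist a c. -/
/-- In a connected interval graph, for vertices with `l a < l b < l c`,
we have `dist a b ≤ dist a c`. -/
theorem stmt_1 {n : ℕ} (l r : Fin n → ℝ) (G : SimpleGraph (Fin n))
    (hlr : ∀ v, l v ≤ r v)
    (hadj : ∀ u v : Fin n, G.Adj u v ↔ u ≠ v ∧ l u ≤ r v ∧ l v ≤ r u)
    (hdistinct : Function.Injective (Sum.elim l r : Fin n ⊕ Fin n → ℝ))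
    (hconn : G.Connected)
    (a b c : Fin n) (hab : l a < l b) (hbc : l b < l c) :
    G.dist a b ≤ G.dist a c := by
  classical
  obtain ⟨p, hp⟩ := (hconn a c).exists_walk_length_eq_dist
  set k := p.length with hk
  -- distance to the i-th vertex of p is at most i
  have hdistle : ∀ i, G.dist a (p.getVert i) ≤ i := by
    intro i
    induction i with
    | zero => simp [p.getVert_zero]
    | succ i ih =>
      by_cases hik : i < k
      · have hadji := p.adj_getVert_succ hik
        have h1 : G.dist (p.getVert i) (p.getVert (i + 1)) = 1 :=
          SimpleGraph.dist_eq_one_iff_adj.mpr hadji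
        calc G.dist a (p.getVert (i + 1))
            ≤ G.dist a (p.getVert i) + G.dist (p.getVert i) (p.getVert (i + 1)) :=
              hconn.dist_triangle
          _ ≤ i + 1 := by omega
      · have : p.getVert (i + 1) = p.getVert i := by
          rw [p.getVert_of_length_le (by omega), p.getVert_of_length_le (by omega)]
        rw [this]; omega
  set P : ℕ → Prop := fun m => l (p.getVert m) ≤ l b with hP
  have hP0 : P 0 := by simp [hP, p.getVert_zero, hab.le]
  have hPk : ¬ P k := by simp [hP, hk, p.getVert_length, not_le, hbc]
  set i := Nat.findGreatest P k with hi
  have hPi : P i := Nat.findGreatest_spec (Nat.zero_le k) hP0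
  have hik : i ≤ k := Nat.findGreatest_le k
  have hiltk : i < k := lt_of_le_of_ne hik (fun h => hPk (h ▸ hPi))
  have hnot : ¬ P (i + 1) := Nat.findGreatest_is_greatest (n := k) (k := i + 1) (by omega) (by omega)
  have hadji := p.adj_getVert_succ hiltk
  have hrv : l b ≤ r (p.getVert i) := by
    have h1 : l (p.getVert (i + 1)) ≤ r (p.getVert i) := ((hadj _ _).mp hadji).2.2
    have h2 : l b < l (p.getVert (i + 1)) := by simpa [hP] using hnot
    linarith
  have hdv : G.dist a (p.getVert i) ≤ i := hdistle i
  by_cases hbe : b = p.getVert i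
  · calc G.dist a b = G.dist a (p.getVert i) := by rw [hbe]
      _ ≤ i := hdv
      _ ≤ G.dist a c := by omega
  · have hadjb : G.Adj (p.getVert i) b := by
      rw [hadj]
      exact ⟨fun h => hbe h.symm, le_trans hPi (hlr b), hrv⟩
    have h1 : G.dist (p.getVert i) b = 1 := SimpleGraph.dist_eq_one_iff_adj.mpr hadjb
    have := hconn.dist_triangle (u := a) (v := p.getVert i) (w := b)
    omega
end

section
/- Let G be a connected interval graph on Fin n given by intervals. For any three vertices a, b, c with r a < r b < r c, one has G.dist b c ≤ G.dist a c. -/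
/-- In a connected interval graph, for vertices with `r a < r b < r c`,
we have `dist b c ≤ dist a c`. -/
theorem stmt_2 {n : ℕ} (l r : Fin n → ℝ) (G : SimpleGraph (Fin n))
    (hlr : ∀ v, l v ≤ r v)
    (hadj : ∀ u v : Fin n, G.Adj u v ↔ u ≠ v ∧ l u ≤ r v ∧ l v ≤ r u)
    (hdistinct : Function.Injective (Sum.elim l r : Fin n ⊕ Fin n → ℝ))
    (hconn : G.Connected)
    (a b c : Fin n) (hab : r a < r b) (hbc : r b < r c) :
    G.dist b c ≤ G.dist a c := by
  have hr : Function.Injective r := by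
    intro x y hxy
    have := hdistinct (a₁ := Sum.inr x) (a₂ := Sum.inr y) (by simpa using hxy)
    simpa using this
  have key : ∀ {a : Fin n} (p : G.Walk a c), r a < r b → G.dist b c ≤ p.length := by
    intro a p h
    induction p with
    | nil => exact absurd (h.trans hbc) (lt_irrefl _)
    | @cons a x c hax q ih =>
      by_cases hxb : x = b
      · exact hxb ▸ ((SimpleGraph.dist_le q).trans (Nat.le_succ _))
      · rcases lt_trichotomy (r x) (r b) with hlt | heq | hgt
        · exact (ih hbc hlt).trans (Nat.le_succ _)
        · exact absurd (hr heq) hxb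
        · have hadjax := (hadj a x).mp hax
          have hbx : G.Adj b x := (hadj b x).mpr
            ⟨fun e => hxb e.symm, (hlr b).trans hgt.le, hadjax.2.2.trans h.le⟩
          have := SimpleGraph.dist_le (SimpleGraph.Walk.cons hbx q)
          simpa using this
  obtain ⟨p, hp⟩ := hconn.exists_walk_length_eq_dist a c
  have := key p hab
  omega
end

section
/- Let G be a connected proper interval graph on Fin n given by intervals. For any three vertices a, b, c with l a < l b < l c, one has G.dist a c ≤ G.dist a b + G.dist b c ≤ G.dist a c + 1. That is, detouring a shortest a–c path through any intermediate vertex b (in left-endpoint order) increases the distance by at most 1. -/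
private lemma aux_dist_left {n : ℕ} {G : SimpleGraph (Fin n)} (hconn : G.Connected) :
    ∀ {u v : Fin n} (p : G.Walk u v) (i : ℕ), G.dist u (p.getVert i) ≤ i := by
  intro u v p
  induction p with
  | nil => intro i; simp [SimpleGraph.Walk.getVert, SimpleGraph.dist_self]
  | @cons u w v h q ih =>
    intro i
    cases i with
    | zero => simp [SimpleGraph.dist_self]
    | succ j =>
      calc G.dist u ((SimpleGraph.Walk.cons h q).getVert (j + 1))
          ≤ G.dist u w + G.dist w (q.getVert j) := hconn.dist_triangle
        _ ≤ 1 + j := by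
            have h1 : G.dist u w ≤ 1 := by
              simpa using SimpleGraph.dist_le h.toWalk
            exact Nat.add_le_add h1 (ih j)
        _ = j + 1 := Nat.add_comm 1 j

private lemma aux_dist_right {n : ℕ} {G : SimpleGraph (Fin n)} (hconn : G.Connected) :
    ∀ {u v : Fin n} (p : G.Walk u v) (i : ℕ), G.dist (p.getVert i) v ≤ p.length - i := by
  intro u v p
  induction p with
  | nil => intro i; simp [SimpleGraph.Walk.getVert]
  | @cons u w v h q ih =>
    intro i
    cases i with
    | zero =>
      simpa using SimpleGraph.dist_le (SimpleGraph.Walk.cons h q)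
    | succ j =>
      have := ih j
      simpa [Nat.succ_sub_succ] using this

/-- In a connected proper interval graph, detouring a shortest `a`–`c` path through any
intermediate vertex `b` (in left-endpoint order) increases the distance by at most 1. -/
theorem stmt_4 {n : ℕ} (l r : Fin n → ℝ) (G : SimpleGraph (Fin n))
    (hlr : ∀ v, l v ≤ r v)
    (hadj : ∀ u v : Fin n, G.Adj u v ↔ u ≠ v ∧ l u ≤ r v ∧ l v ≤ r u)
    (hproper : ∀ u v : Fin n, l u < l v ↔ r u < r v)
    (hdistinct : Function.Injective (Sum.elim l r : Fin n ⊕ Fin n → ℝ))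
    (hconn : G.Connected)
    (a b c : Fin n) (hab : l a < l b) (hbc : l b < l c) :
    G.dist a c ≤ G.dist a b + G.dist b c ∧
      G.dist a b + G.dist b c ≤ G.dist a c + 1 := by
  refine ⟨hconn.dist_triangle, ?_⟩
  obtain ⟨p, hp⟩ := hconn.exists_walk_length_eq_dist a c
  set d := G.dist a c with hd
  -- case: b appears on the walk
  by_cases hb : ∃ i ≤ d, p.getVert i = b
  · obtain ⟨i, hid, hib⟩ := hb
    have h1 : G.dist a b ≤ i := hib ▸ aux_dist_left hconn p i
    have h2 : G.dist b c ≤ d - i := by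
      have := aux_dist_right hconn p i
      rwa [hib, hp] at this
    omega
  · push_neg at hb
    -- largest index i with l (getVert i) < l b
    have hbne : ∀ i ≤ d, p.getVert i ≠ b := hb
    have hlne : ∀ i ≤ d, l (p.getVert i) ≠ l b := by
      intro i hi heq
      exact hbne i hi (Sum.inl.inj (hdistinct (a₁ := Sum.inl (p.getVert i))
        (a₂ := Sum.inl b) (by simpa using heq)))
    classical
    set S : Finset ℕ := (Finset.range (d + 1)).filter (fun i => l (p.getVert i) < l b) with hS
    have h0S : 0 ∈ S := by
      simp [hS, Finset.mem_filter, p.getVert_zero, hab]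
    have hSne : S.Nonempty := ⟨0, h0S⟩
    set i := S.max' hSne with hi
    have hiS : i ∈ S := S.max'_mem hSne
    have hiR : i < d + 1 ∧ l (p.getVert i) < l b := by
      simpa [hS, Finset.mem_filter, Finset.mem_range] using hiS
    have hid : i < d := by
      rcases Nat.lt_or_ge i d with h | h
      · exact h
      · exfalso
        have : i = d := by omega
        rw [this, ← hp, p.getVert_length] at hiR
        exact absurd hiR.2 (not_lt.mpr hbc.le)
    have hnext : ¬ l (p.getVert (i + 1)) < l b := by
      intro hlt
      have : i + 1 ∈ S := by
        simp [hS, Finset.mem_filter, Finset.mem_range]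
        exact ⟨by omega, hlt⟩
      have := S.le_max' _ this
      omega
    have hwgt : l b < l (p.getVert (i + 1)) := by
      rcases lt_or_eq_of_le (not_lt.mp hnext) with h | h
      · exact h
      · exact absurd h.symm (hlne (i + 1) (by omega))
    set u := p.getVert i with hu
    set w := p.getVert (i + 1) with hw
    have huw : G.Adj u w := p.adj_getVert_succ (by omega)
    have huw' := (hadj u w).mp huw
    have hult : l u < l b := hiR.2
    -- b adjacent to u
    have hbu : G.Adj b u := (hadj b u).mpr
      ⟨fun h => (h ▸ hult).false.elim ,
       le_trans hwgt.le huw'.2.2, le_trans hult.le (hlr b)⟩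
    -- b adjacent to w
    have hbw : G.Adj b w := (hadj b w).mpr
      ⟨fun h => (h ▸ hwgt).false.elim,
       le_trans hwgt.le (hlr w),
       le_trans huw'.2.2 ((hproper u b).mp hult).le⟩
    have h1 : G.dist a b ≤ i + 1 :=
      le_trans hconn.dist_triangle
        (Nat.add_le_add (aux_dist_left hconn p i)
          (by simpa using SimpleGraph.dist_le hbu.symm.toWalk))
    have h2 : G.dist b c ≤ 1 + (d - (i + 1)) := by
      refine le_trans (hconn.dist_triangle (v := w)) (Nat.add_le_add ?_ ?_)
      · simpa using SimpleGraph.dist_le hbw.toWalk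
      · have := aux_dist_right hconn p (i + 1)
        rwa [hp] at this
    omega
end

section
/- Let G be a connected interval graph on Fin n given by intervals. For any three vertices a, b, c with l a < l b < l c, one has G.dist a c ≤ G.dist a b + G.dist b c ≤ G.dist a c + 2. That is, detouring a shortest a–c path through any intermediate vertex b (in left-endpoint order) increases the distance by at most 2. -/
/-- In a connected interval graph, detouring a shortest `a`–`c` path through any
intermediate vertex `b` (in left-endpoint order) increases the distance by at most 2. -/
theorem stmt_5 {n : ℕ} (l r : Fin n → ℝ) (G : SimpleGraph (Fin n))
    (hlr : ∀ v, l v ≤ r v)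
    (hadj : ∀ u v : Fin n, G.Adj u v ↔ u ≠ v ∧ l u ≤ r v ∧ l v ≤ r u)
    (hdistinct : Function.Injective (Sum.elim l r : Fin n ⊕ Fin n → ℝ))
    (hconn : G.Connected)
    (a b c : Fin n) (hab : l a < l b) (hbc : l b < l c) :
    G.dist a c ≤ G.dist a b + G.dist b c ∧
      G.dist a b + G.dist b c ≤ G.dist a c + 2 := by
  refine ⟨hconn.dist_triangle, ?_⟩
  have key : ∀ (x : Fin n) (q : G.Walk x c), l x < l b →
      ∃ u ∈ q.support, u = b ∨ G.Adj u b := by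
    intro x q
    induction q with
    | nil => intro h; exact absurd (h.trans hbc) (lt_irrefl _)
    | @cons x v c hxv q ih =>
      intro hx
      rcases lt_trichotomy (l v) (l b) with hv | hv | hv
      · obtain ⟨u, hu, h⟩ := ih hbc hv
        exact ⟨u, by simp [hu], h⟩
      · have : v = b := by
          have := hdistinct (a₁ := Sum.inl v) (a₂ := Sum.inl b) (by simpa using hv)
          simpa using this
        exact ⟨v, by simp, Or.inl this⟩
      · -- x and v cross b; x is adjacent to b
        have hx2 := (hadj x v).mp hxv
        have : G.Adj x b := (hadj x b).mpr
          ⟨fun h => absurd (h ▸ hx) (lt_irrefl _),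
           le_trans hx.le (hlr b), le_trans (hv.trans_le hx2.2.2).le (le_refl _)⟩
        exact ⟨x, by simp, Or.inr this⟩
  obtain ⟨p, hp⟩ := (hconn a c).exists_walk_length_eq_dist
  obtain ⟨u, hu, hcase⟩ := key a p hab
  have h1 : G.dist a u ≤ (p.takeUntil u hu).length := SimpleGraph.dist_le _
  have h2 : G.dist u c ≤ (p.dropUntil u hu).length := SimpleGraph.dist_le _
  have hsum : (p.takeUntil u hu).length + (p.dropUntil u hu).length = G.dist a c := by
    rw [← hp, ← SimpleGraph.Walk.length_append, p.take_spec hu]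
  rcases hcase with rfl | hadjub
  · omega
  · have hab' : G.dist a b ≤ G.dist a u + 1 := by
      calc G.dist a b ≤ G.dist a u + G.dist u b := hconn.dist_triangle
        _ ≤ G.dist a u + 1 := by
            have : G.dist u b ≤ 1 := by
              simpa using SimpleGraph.dist_le (SimpleGraph.Walk.cons hadjub SimpleGraph.Walk.nil)
            omega
    have hbc' : G.dist b c ≤ 1 + G.dist u c := by
      calc G.dist b c ≤ G.dist b u + G.dist u c := hconn.dist_triangle
        _ ≤ 1 + G.dist u c := by
            have : G.dist b u ≤ 1 := by
              simpa using SimpleGraph.dist_le (SimpleGraph.Walk.cons hadjub.symm SimpleGraph.Walk.nil)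
            omega
    omega
end

section
/- Let G be a connected interval graph on Fin n given by intervals, and let u, v, w, w' be vertices with l u < l w, l v < l w and l w < l w'. Then G.dist u w + G.dist v w ≤ G.dist u w' + G.dist v w'. In particular, among all candidate vertices whose left endpoint exceeds those of both u and v, the one with smallest left endpoint minimizes G.dist u · + G.dist v ·. -/
lemma interval_dist_aux {n : ℕ} (l r : Fin n → ℝ) (G : SimpleGraph (Fin n))
    (hlr : ∀ v, l v ≤ r v)
    (hadj : ∀ u v : Fin n, G.Adj u v ↔ u ≠ v ∧ l u ≤ r v ∧ l v ≤ r u)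
    (hconn : G.Connected) (w : Fin n) :
    ∀ {a b : Fin n} (W : G.Walk a b), l a ≤ l w → l w < l b → G.dist a w ≤ W.length := by
  intro a b W
  induction W with
  | nil => intro h1 h2; exact absurd (h1.trans_lt h2) (lt_irrefl _)
  | @cons a c b hac W ih =>
    intro h1 h2
    by_cases hcase : l w ≤ r a
    · by_cases haw : a = w
      · subst haw; rw [SimpleGraph.dist_self]; exact Nat.zero_le _
      · have hadj' : G.Adj a w := (hadj a w).mpr ⟨haw, h1.trans (hlr w), hcase⟩
        calc G.dist a w ≤ hadj'.toWalk.length := SimpleGraph.dist_le _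
          _ ≤ (SimpleGraph.Walk.cons hac W).length := by
              simp [SimpleGraph.Walk.length_cons]
    · have hc : l c ≤ r a := ((hadj a c).mp hac).2.2
      have hcw : l c ≤ l w := le_of_lt (lt_of_le_of_lt hc (lt_of_not_ge hcase))
      have h3 : G.dist c w ≤ W.length := ih hcw h2
      calc G.dist a w ≤ G.dist a c + G.dist c w := hconn.dist_triangle
        _ ≤ hac.toWalk.length + W.length :=
            Nat.add_le_add (SimpleGraph.dist_le _) h3
        _ = (SimpleGraph.Walk.cons hac W).length := by
            simp [SimpleGraph.Walk.length_cons, Nat.add_comm]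

/-- In a connected interval graph, among all candidate vertices whose left endpoint exceeds
those of both `u` and `v`, the one with smallest left endpoint minimizes
`dist u · + dist v ·`. -/
theorem stmt_6 {n : ℕ} (l r : Fin n → ℝ) (G : SimpleGraph (Fin n))
    (hlr : ∀ v, l v ≤ r v)
    (hadj : ∀ u v : Fin n, G.Adj u v ↔ u ≠ v ∧ l u ≤ r v ∧ l v ≤ r u)
    (hdistinct : Function.Injective (Sum.elim l r : Fin n ⊕ Fin n → ℝ))
    (hconn : G.Connected)
    (u v w w' : Fin n) (huw : l u < l w) (hvw : l v < l w) (hww' : l w < l w') :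
    G.dist u w + G.dist v w ≤ G.dist u w' + G.dist v w' := by
  obtain ⟨Wu, hWu⟩ := hconn.exists_walk_length_eq_dist u w'
  obtain ⟨Wv, hWv⟩ := hconn.exists_walk_length_eq_dist v w'
  have h1 : G.dist u w ≤ G.dist u w' := by
    rw [← hWu]; exact interval_dist_aux l r G hlr hadj hconn w Wu huw.le hww'
  have h2 : G.dist v w ≤ G.dist v w' := by
    rw [← hWv]; exact interval_dist_aux l r G hlr hadj hconn w Wv hvw.le hww'
  exact Nat.add_le_add h1 h2
end

section
/- Let G be a connected interval graph on Fin n given by intervals, and let u, v, w, w' be vertices with r w < r u, r w < r v and r w' < r w. Then G.dist u w + G.dist v w ≤ G.dist u w' + G.dist v w'. That is, among all candidate vertices whose right endpoint is smaller than those of both u and v, the one with largest right endpoint minimizes G.dist u · + G.dist v ·. -/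
private lemma walk_aux {n : ℕ} (l r : Fin n → ℝ) (G : SimpleGraph (Fin n))
    (hlr : ∀ v, l v ≤ r v)
    (hadj : ∀ u v : Fin n, G.Adj u v ↔ u ≠ v ∧ l u ≤ r v ∧ l v ≤ r u)
    (hr : ∀ a b : Fin n, r a = r b → a = b)
    (hconn : G.Connected) (w : Fin n) :
    ∀ {u x : Fin n} (p : G.Walk u x), r w < r u → r x < r w → G.dist u w ≤ p.length := by
  intro u x p
  induction p with
  | nil => intro h1 h2; exact absurd (h2.trans h1) (lt_irrefl _)
  | @cons a b c hab p ih =>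
    intro h1 h2
    by_cases hbw : b = w
    · have haw : G.Adj a w := hbw ▸ hab
      have h1' : G.dist a w ≤ 1 := le_of_eq (SimpleGraph.dist_eq_one_iff_adj.mpr haw)
      simp only [SimpleGraph.Walk.length_cons]
      omega
    · rcases lt_or_gt_of_ne (fun h => hbw (hr b w h)) with hlt | hgt
      · -- r b < r w : a is adjacent to w (or equal, impossible)
        have haw : G.Adj a w := by
          rw [hadj]
          refine ⟨fun h => ?_, ?_, ?_⟩
          · subst h; exact absurd h1 (lt_irrefl _)
          · exact le_of_lt (lt_of_le_of_lt ((hadj a b).mp hab).2.1 hlt)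
          · exact le_of_lt (lt_of_le_of_lt (hlr w) h1)
        have h1' : G.dist a w ≤ 1 := le_of_eq (SimpleGraph.dist_eq_one_iff_adj.mpr haw)
        simp only [SimpleGraph.Walk.length_cons]
        omega
      · -- r w < r b : use IH from b
        have hb := ih hgt h2
        have htri := hconn.dist_triangle (u := a) (v := b) (w := w)
        have hd1 : G.dist a b ≤ 1 := le_of_eq (SimpleGraph.dist_eq_one_iff_adj.mpr hab)
        simp only [SimpleGraph.Walk.length_cons]
        omega

/-- In a connected interval graph, among all candidate vertices whose right endpoint is
smaller than those of both `u` and `v`, the one with largest right endpoint minimizes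
`dist u · + dist v ·`. -/
theorem stmt_7 {n : ℕ} (l r : Fin n → ℝ) (G : SimpleGraph (Fin n))
    (hlr : ∀ v, l v ≤ r v)
    (hadj : ∀ u v : Fin n, G.Adj u v ↔ u ≠ v ∧ l u ≤ r v ∧ l v ≤ r u)
    (hdistinct : Function.Injective (Sum.elim l r : Fin n ⊕ Fin n → ℝ))
    (hconn : G.Connected)
    (u v w w' : Fin n) (hwu : r w < r u) (hwv : r w < r v) (hw'w : r w' < r w) :
    G.dist u w + G.dist v w ≤ G.dist u w' + G.dist v w' := by
  have hr : ∀ a b : Fin n, r a = r b → a = b := fun a b h => by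
    have := hdistinct (a₁ := Sum.inr a) (a₂ := Sum.inr b) (by simpa using h)
    simpa using this
  obtain ⟨p, hp⟩ := hconn.exists_walk_length_eq_dist u w'
  obtain ⟨q, hq⟩ := hconn.exists_walk_length_eq_dist v w'
  have h1 := walk_aux l r G hlr hadj hr hconn w p hwu hw'w
  have h2 := walk_aux l r G hlr hadj hr hconn w q hwv hw'w
  omega
end

section
/- Let α be a finite type and σ : Equiv.Perm α a permutation. The number of finsets s : Finset α with s.image σ = s equals 2 ^ c, where c is the total number of cycles of σ (counting fixed points as cycles of length 1), i.e., c = σ.cycleType.card + (number of fixed points of σ). -/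
/-!
A finset is `σ`-invariant iff it is a union of cycles of `σ` (fixed points counting as cycles),
so invariant finsets correspond to arbitrary sets of cycles. Instead of passing to the quotient by
`SameCycle`, each point is labelled by its cycle: `σ.cycleOf x` if `x` is moved, `x` itself if it
is fixed. The labels are then exactly the cycle factors together with the fixed points.
-/

open Finset
open scoped Pointwise

namespace Finset

variable {α β : Type*} [Fintype α] [DecidableEq α] [DecidableEq β]

theorem card_filter_saturated (f : α → β) :
    #{s : Finset α | ∀ x y, f x = f y → x ∈ s → y ∈ s} = 2 ^ #(univ.image f) := by
  rw [← card_powerset]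
  symm
  refine card_nbij' (fun t => univ.filter (f · ∈ t)) (fun s => s.image f) ?_ ?_ ?_ ?_
  · intro t _
    simp only [coe_filter, mem_univ, true_and]
    intro x y hxy hx
    simpa [← hxy] using hx
  · intro s _
    simp
  · intro t ht
    ext b
    simp only [mem_image, mem_filter, mem_univ, true_and]
    refine ⟨fun ⟨x, hx, hxb⟩ => hxb ▸ hx, fun hb => ?_⟩
    obtain ⟨x, -, rfl⟩ := mem_image.mp (mem_powerset.mp ht hb)
    exact ⟨x, hb, rfl⟩
  · intro s hs
    simp only [coe_filter, mem_univ, true_and] at hs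
    ext y
    simp only [mem_filter, mem_univ, true_and, mem_image]
    exact ⟨fun ⟨x, hx, hxy⟩ => hs x y hxy hx, fun hy => ⟨y, hy, rfl⟩⟩

end Finset

namespace Equiv.Perm

variable {α : Type*} [DecidableEq α]

theorem image_eq_self_iff_forall_sameCycle (σ : Perm α) (s : Finset α) :
    s.image σ = s ↔ ∀ x y, σ.SameCycle x y → x ∈ s → y ∈ s := by
  constructor
  · rintro hs x y ⟨n, rfl⟩ hx
    have hσ : σ ∈ MulAction.stabilizer (Perm α) s := by
      simpa [MulAction.mem_stabilizer_iff, Finset.smul_finset_def] using hs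
    have hσn : (σ ^ n) • s = s := Subgroup.zpow_mem _ hσ n
    simpa [hσn] using Finset.smul_mem_smul_finset (a := σ ^ n) hx
  · intro hs
    have hsub : s.image σ ⊆ s := by
      intro y hy
      obtain ⟨x, hx, rfl⟩ := mem_image.mp hy
      exact hs x (σ x) (sameCycle_apply_right.mpr (SameCycle.refl σ x)) hx
    exact eq_of_subset_of_card_le hsub (card_image_of_injective s σ.injective).ge

variable [Fintype α] (σ : Perm α)

def cycleLabel (x : α) : Perm α ⊕ α :=
  if σ x = x then .inr x else .inl (σ.cycleOf x)

theorem cycleLabel_eq_cycleLabel_iff {x y : α} :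
    σ.cycleLabel x = σ.cycleLabel y ↔ σ.SameCycle x y := by
  by_cases hx : σ x = x <;> by_cases hy : σ y = y
  · simp only [cycleLabel, hx, hy, if_true, Sum.inr.injEq]
    exact ⟨fun h => h ▸ SameCycle.refl σ x, fun h => h.eq_of_left hx⟩
  · simp only [cycleLabel, hx, hy, if_true, if_false, reduceCtorEq, false_iff]
    exact fun h => hy (h.apply_eq_self_iff.mp hx)
  · simp only [cycleLabel, hx, hy, if_true, if_false, reduceCtorEq, false_iff]
    exact fun h => hx (h.apply_eq_self_iff.mpr hy)
  · simp only [cycleLabel, hx, hy, if_false, Sum.inl.injEq]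
    exact (sameCycle_iff_cycleOf_eq_of_mem_support (mem_support.mpr hx) (mem_support.mpr hy)).symm

theorem image_cycleLabel :
    univ.image σ.cycleLabel = σ.cycleFactorsFinset.disjSum {x | σ x = x} := by
  ext (c | x)
  · simp only [mem_image, mem_univ, true_and, inl_mem_disjSum, cycleLabel]
    constructor
    · rintro ⟨x, hx⟩
      split_ifs at hx with hσx
      cases hx
      exact cycleOf_mem_cycleFactorsFinset_iff.mpr (mem_support.mpr hσx)
    · intro hc
      obtain ⟨a, ha⟩ := (mem_cycleFactorsFinset_iff.mp hc).1.nonempty_support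
      have hσa : σ a ≠ a := mem_support.mp (mem_cycleFactorsFinset_support_le hc ha)
      exact ⟨a, by rw [if_neg hσa, cycle_is_cycleOf ha hc]⟩
  · simp only [mem_image, mem_univ, true_and, inr_mem_disjSum, mem_filter, cycleLabel]
    constructor
    · rintro ⟨y, hy⟩
      split_ifs at hy with hσy
      cases hy
      exact hσy
    · exact fun hx => ⟨x, if_pos hx⟩

end Equiv.Perm

/-- For a permutation `σ` of a finite type, the number of `σ`-invariant finsets is
`2 ^ c`, where `c` is the total number of cycles of `σ` (counting fixed points). -/
theorem stmt_9 {α : Type*} [Fintype α] [DecidableEq α] (σ : Equiv.Perm α) :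
    (Finset.univ.filter (fun s : Finset α => s.image σ = s)).card =
      2 ^ (σ.cycleType.card + (Finset.univ.filter (fun x : α => σ x = x)).card) := by
  have hinv : ∀ s : Finset α, s.image σ = s ↔
      ∀ x y, σ.cycleLabel x = σ.cycleLabel y → x ∈ s → y ∈ s := fun s => by
    simp only [σ.image_eq_self_iff_forall_sameCycle, σ.cycleLabel_eq_cycleLabel_iff]
  rw [filter_congr fun s _ => hinv s, card_filter_saturated, σ.image_cycleLabel, card_disjSum,
    Equiv.Perm.cycleType_def, Multiset.card_map, card_val]
end

section
/- Let h : ℕ and k : Fin h → ℕ. The product group ∀ i, Equiv.Perm (Fin (k i)) acts on the sigma type Σ i, Fin (k i) componentwise (σ • ⟨i, x⟩ = ⟨i, (σ i) x⟩), and hence on Finset (Σ i, Fin (k i)) by image. The number of orbits of this action on Finset (Σ i, Fin (k i)) equals ∏ i, (k i + 1). -/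
/-!
The orbit of a finset `s` of `Σ i, Fin (k i)` is determined by the sizes of its fibers
`#(s.fiber i)`: each factor `Equiv.Perm (Fin (k i))` acts transitively on the subsets of
`Fin (k i)` of any fixed size, and the factors act on different fibers independently. Since every
vector of sizes `0 ≤ nᵢ ≤ k i` is realised, the orbits are in bijection with `∀ i, Fin (k i + 1)`.
-/

open Pointwise

/-- The componentwise action of the Young subgroup `∀ i, Equiv.Perm (Fin (k i))`
on the disjoint union `Σ i, Fin (k i)`. -/
instance youngAction {h : ℕ} {k : Fin h → ℕ} :
    MulAction (∀ i, Equiv.Perm (Fin (k i))) ((i : Fin h) × Fin (k i)) where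
  smul σ x := ⟨x.1, σ x.1 x.2⟩
  one_smul x := rfl
  mul_smul σ τ x := rfl

open Finset MulAction

namespace Finset

theorem exists_perm_smul_eq_of_card_eq {α : Type*} [DecidableEq α] {s t : Finset α}
    (hst : #s = #t) : ∃ σ : Equiv.Perm α, σ • s = t := by
  obtain ⟨σ, hσ⟩ := (Set.powersetCard.isPretransitive (α := α) (n := #s)).exists_smul_eq
    (Set.powersetCard.ofCard rfl) (Set.powersetCard.ofCard hst.symm)
  exact ⟨σ, congrArg Subtype.val hσ⟩

variable {ι : Type*} {α : ι → Type*}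

noncomputable def fiber (s : Finset (Σ i, α i)) (i : ι) : Finset (α i) :=
  s.preimage (Sigma.mk i) sigma_mk_injective.injOn

@[simp]
theorem mem_fiber {s : Finset (Σ i, α i)} {i : ι} {a : α i} : a ∈ s.fiber i ↔ ⟨i, a⟩ ∈ s :=
  mem_preimage

theorem ext_fiber {s t : Finset (Σ i, α i)} (h : ∀ i, s.fiber i = t.fiber i) : s = t := by
  ext ⟨i, a⟩
  simpa using congrArg (a ∈ ·) (h i)

@[simp]
theorem fiber_univ_sigma [Fintype ι] (t : ∀ i, Finset (α i)) (i : ι) :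
    (univ.sigma t).fiber i = t i := by
  ext; simp

end Finset

namespace Young

variable {h : ℕ} {k : Fin h → ℕ}

theorem fiber_smul (σ : ∀ i, Equiv.Perm (Fin (k i))) (s : Finset (Σ i, Fin (k i))) (i : Fin h) :
    (σ • s).fiber i = σ i • s.fiber i := by
  ext a
  simp only [mem_fiber, mem_smul_finset]
  constructor
  · rintro ⟨⟨j, b⟩, hb, hba⟩
    obtain ⟨rfl, hba⟩ := Sigma.mk.inj_iff.mp hba
    exact ⟨b, by simpa using hb, eq_of_heq hba⟩
  · rintro ⟨b, hb, rfl⟩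
    exact ⟨⟨i, b⟩, hb, rfl⟩

noncomputable def fiberCard (s : Finset (Σ i, Fin (k i))) (i : Fin h) : Fin (k i + 1) :=
  ⟨#(s.fiber i), Nat.lt_succ_of_le (card_le_univ _ |>.trans_eq (Fintype.card_fin _))⟩

theorem fiberCard_smul (σ : ∀ i, Equiv.Perm (Fin (k i))) (s : Finset (Σ i, Fin (k i))) :
    fiberCard (σ • s) = fiberCard s := by
  funext i
  simp [fiberCard, fiber_smul]

theorem exists_smul_eq_of_fiberCard_eq {s t : Finset (Σ i, Fin (k i))}
    (hst : fiberCard s = fiberCard t) : ∃ σ : ∀ i, Equiv.Perm (Fin (k i)), σ • s = t := by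
  choose σ hσ using fun i ↦
    exists_perm_smul_eq_of_card_eq (Fin.val_eq_of_eq (congrFun hst i))
  exact ⟨σ, ext_fiber fun i ↦ by rw [fiber_smul, hσ]⟩

theorem fiberCard_surjective : Function.Surjective (fiberCard (k := k)) := by
  intro v
  choose t _ ht using fun i ↦
    exists_subset_card_eq (s := (univ : Finset (Fin (k i)))) (n := v i)
      (by simpa using Nat.lt_succ_iff.mp (v i).isLt)
  exact ⟨univ.sigma t, funext fun i ↦ Fin.ext (by simp [fiberCard, ht])⟩

noncomputable def orbitRelQuotientEquiv :
    Quotient (orbitRel (∀ i, Equiv.Perm (Fin (k i))) (Finset (Σ i, Fin (k i)))) ≃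
      ∀ i, Fin (k i + 1) :=
  .ofBijective
    (Quotient.lift fiberCard fun _ _ hst ↦ by
      obtain ⟨σ, rfl⟩ := orbitRel_apply.mp hst
      exact fiberCard_smul σ _)
    ⟨by
      rintro ⟨s⟩ ⟨t⟩ hst
      obtain ⟨σ, hσ⟩ := exists_smul_eq_of_fiberCard_eq hst
      exact (Quotient.sound (orbitRel_apply.mpr ⟨σ, hσ⟩)).symm,
    fun v ↦ let ⟨s, hs⟩ := fiberCard_surjective v; ⟨⟦s⟧, hs⟩⟩

end Young

/-- The number of orbits of the Young subgroup `∀ i, Equiv.Perm (Fin (k i))` acting on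
finsets of `Σ i, Fin (k i)` (by taking images componentwise) is `∏ i, (k i + 1)`. -/
theorem stmt_10 (h : ℕ) (k : Fin h → ℕ) :
    Nat.card (Quotient (MulAction.orbitRel (∀ i, Equiv.Perm (Fin (k i)))
        (Finset ((i : Fin h) × Fin (k i))))) = ∏ i, (k i + 1) := by
  rw [Nat.card_congr Young.orbitRelQuotientEquiv, Nat.card_pi]
  simp
end

section
/- For every natural number n, Nat.catalan (n + 1) = Σ_{x = 0}^{n} Σ_{y = 0}^{⌊(n − x)/2⌋} (n choose x) · ((n − x) choose 2y) · Nat.catalan y. -/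
/-!
Summing over `x` first, `∑ x, (n choose x) ((n - x) choose k) = (n choose k) 2 ^ (n - k)` turns the
right-hand side into Touchard's identity `C (n + 1) = ∑ k, (n choose 2k) 2 ^ (n - 2k) C k`.
Write `u n` for the right-hand side of Touchard's identity and `v n` for the odd analogue
`∑ k, (n choose 2k+1) 2 ^ (n - 2k - 1) C (k + 1)`. Pascal's rule gives `u (n + 1) = 2 u n + v n`,
and the diagonal Vandermonde identity `∑ i, (i choose p) ((m - i) choose q) = (m + 1) choose
(p + q + 1)` together with Segner's recurrence gives `v (m + 1) = ∑_{i + j = m} u i u j`.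
Splitting the two extreme terms off Segner's recurrence shows that `n ↦ C (n + 1)` satisfies the
same recurrences, so `u n = C (n + 1)` by strong induction.
-/

open Finset

theorem sum_antidiagonal_choose_mul_choose (m p q : ℕ) :
    ∑ ij ∈ antidiagonal m, ij.1.choose p * ij.2.choose q = (m + 1).choose (p + q + 1) := by
  induction m generalizing q with
  | zero =>
    rcases p with _ | p <;> rcases q with _ | q <;> simp <;>
      exact (Nat.choose_eq_zero_of_lt (by omega)).symm
  | succ m ih =>
    rw [Nat.sum_antidiagonal_succ']
    rcases q with _ | q
    · have ih0 := ih 0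
      simp only [Nat.choose_zero_right, mul_one, add_zero] at ih0 ⊢
      rw [ih0, Nat.choose_succ_succ' (m + 1) p]
    · simp only [Nat.choose_succ_succ' _ q, mul_add, sum_add_distrib, ih, Nat.choose_zero_succ,
        mul_zero, zero_add]
      rw [show p + (q + 1) = p + q + 1 by ring, ← Nat.choose_succ_succ']

theorem choose_mul_choose_sub_comm (n x k : ℕ) :
    n.choose x * (n - x).choose k = n.choose k * (n - k).choose x := by
  have hx := Nat.choose_mul (n := n) (Nat.le_add_right x k)
  have hk := Nat.choose_mul (n := n) (Nat.le_add_left k x)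
  rw [Nat.add_sub_cancel_left] at hx
  rw [Nat.add_sub_cancel] at hk
  rw [← hx, ← hk, Nat.choose_symm_add]

theorem sum_range_choose_mul_choose_sub (n k : ℕ) :
    ∑ x ∈ range (n + 1), n.choose x * (n - x).choose k = n.choose k * 2 ^ (n - k) := by
  simp_rw [choose_mul_choose_sub_comm n _ k, ← mul_sum, ← Nat.sum_range_choose (n - k)]
  congr 1
  refine (sum_subset (fun x hx => by simp only [mem_range] at hx ⊢; omega) fun x _ hx => ?_).symm
  exact Nat.choose_eq_zero_of_lt (by simp only [mem_range, not_lt] at hx; omega)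

section Transform

variable {R : Type*} [CommSemiring R]

/-- If `c` has generating function `C(t)`, then `evenTransform c` has generating function
`C(t² / (1 - 2t)²) / (1 - 2t)`. -/
def evenTransform (c : ℕ → R) (n : ℕ) : R :=
  ∑ k ∈ range (n + 1), (n.choose (2 * k) * 2 ^ (n - 2 * k) : R) * c k

def oddTransform (c : ℕ → R) (n : ℕ) : R :=
  ∑ k ∈ range (n + 1), (n.choose (2 * k + 1) * 2 ^ (n - (2 * k + 1)) : R) * c k

theorem evenTransform_eq_sum_range (c : ℕ → R) {n N : ℕ} (h : n ≤ N) :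
    evenTransform c n = ∑ k ∈ range (N + 1), (n.choose (2 * k) * 2 ^ (n - 2 * k) : R) * c k := by
  refine sum_subset (fun k hk => by simp only [mem_range] at hk ⊢; omega) fun k _ hk => ?_
  rw [Nat.choose_eq_zero_of_lt (by simp only [mem_range, not_lt] at hk; omega)]
  simp

theorem cast_choose_succ_mul_two_pow (n j : ℕ) :
    ((n + 1).choose (j + 1) * 2 ^ (n - j) : R) =
      2 * (n.choose (j + 1) * 2 ^ (n - (j + 1))) + n.choose j * 2 ^ (n - j) := by
  rw [Nat.choose_succ_succ', Nat.cast_add, add_mul, add_comm]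
  congr 1
  rcases Nat.lt_or_ge n (j + 1) with h | h
  · simp [Nat.choose_eq_zero_of_lt h]
  · rw [show n - j = n - (j + 1) + 1 by omega, pow_succ]
    ring

theorem evenTransform_succ (c : ℕ → R) (n : ℕ) :
    evenTransform c (n + 1) = 2 * evenTransform c n + oddTransform (fun k => c (k + 1)) n := by
  have hterm : ∀ k, ((n + 1).choose (2 * (k + 1)) * 2 ^ (n + 1 - 2 * (k + 1)) : R) =
      2 * (n.choose (2 * (k + 1)) * 2 ^ (n - 2 * (k + 1))) +
        n.choose (2 * k + 1) * 2 ^ (n - (2 * k + 1)) := fun k => by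
    rw [show n + 1 - 2 * (k + 1) = n - (2 * k + 1) by omega,
      show 2 * (k + 1) = 2 * k + 1 + 1 by ring]
    exact cast_choose_succ_mul_two_pow n (2 * k + 1)
  rw [evenTransform, evenTransform_eq_sum_range c n.le_succ, oddTransform]
  simp only [sum_range_succ' _ (n + 1), hterm, add_mul, sum_add_distrib]
  rw [mul_add (2 : R), mul_sum]
  simp only [mul_zero, Nat.choose_zero_right, Nat.cast_one, one_mul, Nat.sub_zero, pow_succ,
    mul_assoc]
  ring

theorem sum_antidiagonal_cast_choose_mul_two_pow (m p q : ℕ) :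
    ∑ ij ∈ antidiagonal m,
        (ij.1.choose p * 2 ^ (ij.1 - p) : R) * (ij.2.choose q * 2 ^ (ij.2 - q)) =
      (m + 1).choose (p + q + 1) * 2 ^ (m - (p + q)) := by
  have hterm : ∀ ij ∈ antidiagonal m,
      (ij.1.choose p * 2 ^ (ij.1 - p) : R) * (ij.2.choose q * 2 ^ (ij.2 - q)) =
        ((ij.1.choose p * ij.2.choose q : ℕ) : R) * 2 ^ (m - (p + q)) := by
    rintro ⟨i, j⟩ hij
    rw [HasAntidiagonal.mem_antidiagonal] at hij
    dsimp only
    rcases Nat.lt_or_ge i p with hp | hp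
    · simp [Nat.choose_eq_zero_of_lt hp]
    rcases Nat.lt_or_ge j q with hq | hq
    · simp [Nat.choose_eq_zero_of_lt hq]
    rw [show m - (p + q) = (i - p) + (j - q) by omega, pow_add]
    push_cast
    ring
  rw [sum_congr rfl hterm, ← sum_mul, ← Nat.cast_sum, sum_antidiagonal_choose_mul_choose]

theorem sum_range_sum_antidiagonal_eq_sum_range_sum_range {M : Type*} [AddCommMonoid M]
    (f : ℕ → ℕ → M) (N : ℕ) (hf : ∀ p q, N ≤ p + q → f p q = 0) :
    ∑ k ∈ range N, ∑ pq ∈ antidiagonal k, f pq.1 pq.2 = ∑ p ∈ range N, ∑ q ∈ range N, f p q := by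
  simp_rw [Nat.sum_antidiagonal_eq_sum_range_succ f, sum_range_diag_flip]
  refine sum_congr rfl fun p _ => sum_subset (range_subset_range.2 (Nat.sub_le N p)) ?_
  intro q _ hq
  exact hf p q (by simp only [mem_range, not_lt] at hq; omega)

theorem sum_antidiagonal_evenTransform_mul (a b : ℕ → R) (m : ℕ) :
    ∑ ij ∈ antidiagonal m, evenTransform a ij.1 * evenTransform b ij.2 =
      oddTransform (fun k => ∑ pq ∈ antidiagonal k, a pq.1 * b pq.2) (m + 1) := by
  have hexpand : ∀ ij ∈ antidiagonal m, evenTransform a ij.1 * evenTransform b ij.2 =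
      ∑ p ∈ range (m + 1), ∑ q ∈ range (m + 1),
        (ij.1.choose (2 * p) * 2 ^ (ij.1 - 2 * p) : R) *
          (ij.2.choose (2 * q) * 2 ^ (ij.2 - 2 * q)) * (a p * b q) := by
    intro ij hij
    rw [evenTransform_eq_sum_range a (HasAntidiagonal.antidiagonal.fst_le hij),
      evenTransform_eq_sum_range b (HasAntidiagonal.antidiagonal.snd_le hij), sum_mul_sum]
    exact sum_congr rfl fun p _ => sum_congr rfl fun q _ => by ring
  have hvanish : ∀ p q, m + 1 ≤ p + q →
      ((m + 1).choose (2 * (p + q) + 1) * 2 ^ (m + 1 - (2 * (p + q) + 1)) : R) *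
        (a p * b q) = 0 :=
    fun p q h => by simp [Nat.choose_eq_zero_of_lt (show m + 1 < 2 * (p + q) + 1 by omega)]
  calc ∑ ij ∈ antidiagonal m, evenTransform a ij.1 * evenTransform b ij.2
      = ∑ p ∈ range (m + 1), ∑ q ∈ range (m + 1),
          ((m + 1).choose (2 * (p + q) + 1) * 2 ^ (m + 1 - (2 * (p + q) + 1)) : R) *
            (a p * b q) := by
        rw [sum_congr rfl hexpand, sum_comm]
        refine sum_congr rfl fun p _ => ?_
        rw [sum_comm]
        refine sum_congr rfl fun q _ => ?_
        rw [← sum_mul, sum_antidiagonal_cast_choose_mul_two_pow,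
          show m + 1 - (2 * (p + q) + 1) = m - (2 * p + 2 * q) by omega, mul_add]
    _ = ∑ k ∈ range (m + 1), ∑ pq ∈ antidiagonal k,
          ((m + 1).choose (2 * (pq.1 + pq.2) + 1) * 2 ^ (m + 1 - (2 * (pq.1 + pq.2) + 1)) : R)
            * (a pq.1 * b pq.2) :=
        (sum_range_sum_antidiagonal_eq_sum_range_sum_range _ _ hvanish).symm
    _ = oddTransform (fun k => ∑ pq ∈ antidiagonal k, a pq.1 * b pq.2) (m + 1) := by
        rw [oddTransform, sum_range_succ _ (m + 1), Nat.choose_eq_zero_of_lt (by omega)]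
        simp only [Nat.cast_zero, zero_mul, sum_const_zero, add_zero, mul_sum]
        refine sum_congr rfl fun k _ => sum_congr rfl fun pq hpq => ?_
        rw [HasAntidiagonal.mem_antidiagonal.1 hpq]

end Transform

theorem catalan_add_three (n : ℕ) :
    catalan (n + 3) =
      2 * catalan (n + 2) + ∑ ij ∈ antidiagonal n, catalan (ij.1 + 1) * catalan (ij.2 + 1) := by
  rw [catalan_succ', Nat.sum_antidiagonal_succ, Nat.sum_antidiagonal_succ']
  simp only [catalan_zero]
  ring

theorem catalan_succ_eq_evenTransform (n : ℕ) : catalan (n + 1) = evenTransform catalan n := by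
  induction n using Nat.strong_induction_on with
  | _ n ih =>
    rcases n with _ | _ | n
    · simp [evenTransform]
    · simp [evenTransform, sum_range_succ, catalan_two]
    have hodd : oddTransform (fun k => catalan (k + 1)) (n + 1) =
        ∑ ij ∈ antidiagonal n, catalan (ij.1 + 1) * catalan (ij.2 + 1) := by
      rw [show (fun k => catalan (k + 1)) = _ from funext catalan_succ',
        ← sum_antidiagonal_evenTransform_mul]
      refine sum_congr rfl fun ij hij => ?_
      have hsum := HasAntidiagonal.mem_antidiagonal.1 hij
      rw [ih ij.1 (by omega), ih ij.2 (by omega)]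
    rw [evenTransform_succ, ← ih (n + 1) (by omega), hodd, catalan_add_three]

/-- The Catalan number identity
`C (n+1) = ∑_{x=0}^{n} ∑_{y=0}^{⌊(n-x)/2⌋} (n choose x) ((n-x) choose 2y) C y`. -/
theorem stmt_11 (n : ℕ) :
    catalan (n + 1) =
      ∑ x ∈ Finset.range (n + 1), ∑ y ∈ Finset.range ((n - x) / 2 + 1),
        n.choose x * (n - x).choose (2 * y) * catalan y := by
  have hextend : ∀ x ∈ range (n + 1),
      ∑ y ∈ range ((n - x) / 2 + 1), n.choose x * (n - x).choose (2 * y) * catalan y =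
        ∑ y ∈ range (n + 1), n.choose x * (n - x).choose (2 * y) * catalan y := by
    refine fun x _ => sum_subset (range_subset_range.2 (by omega)) fun y _ hy => ?_
    rw [mem_range, not_lt] at hy
    rw [Nat.choose_eq_zero_of_lt (n := n - x) (k := 2 * y) (by omega), mul_zero, zero_mul]
  rw [sum_congr rfl hextend, sum_comm, catalan_succ_eq_evenTransform, evenTransform]
  refine sum_congr rfl fun y _ => ?_
  rw [← sum_mul, sum_range_choose_mul_choose_sub, Nat.cast_id]
end

section
/- For every natural number k ≥ 3, h(k) + 2·h(k − 2) = 4·h(k − 1) (equivalently, h(k) = 4·h(k−1) − 2·h(k−2)). -/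
/-- `hcomp k` is the sum over all compositions `c` of `k` of `∏_{p ∈ c.blocks} (p + 1)`;
in particular `hcomp 0 = 1`. -/
def hcomp (k : ℕ) : ℕ := ∑ c : Composition k, (c.blocks.map (· + 1)).prod

/-!
Splitting off the first block, of size `n + 1 - i`, gives
`h(n + 1) = ∑_{i ≤ n} (n + 2 - i) h(i)`. Comparing this sum for `n` and `n + 1` gives
`h(n + 2) = 3 h(n + 1) + ∑_{i ≤ n} h(i)`, and subtracting two consecutive instances of that
identity eliminates the partial sums: `h(n + 3) - h(n + 2) = 3 h(n + 2) - 2 h(n + 1)`.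
-/

open Finset

namespace Composition

def consBlock (n : ℕ) (x : Σ i : Fin (n + 1), Composition i) : Composition (n + 1) where
  blocks := (n + 1 - x.1) :: x.2.blocks
  blocks_pos {j} hj := by
    rcases List.mem_cons.1 hj with rfl | hj
    · have := x.1.isLt; omega
    · exact x.2.blocks_pos hj
  blocks_sum := by
    have := x.1.isLt
    rw [List.sum_cons, x.2.blocks_sum]
    omega

theorem consBlock_bijective (n : ℕ) : Function.Bijective (consBlock n) := by
  constructor
  · rintro ⟨i, c⟩ ⟨i', c'⟩ h
    obtain ⟨-, htail⟩ := List.cons.inj (congrArg Composition.blocks h)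
    obtain rfl : i = i' :=
      Fin.ext (by rw [← c.blocks_sum, ← c'.blocks_sum]; exact congrArg _ htail)
    exact congrArg (Sigma.mk i) (Composition.ext htail)
  · rintro ⟨_ | ⟨a, l⟩, hpos, hsum⟩
    · simp at hsum
    · rw [List.sum_cons] at hsum
      have ha : 0 < a := hpos List.mem_cons_self
      refine ⟨⟨⟨l.sum, by omega⟩, ⟨l, fun h => hpos (List.mem_cons_of_mem a h), rfl⟩⟩,
        ?_⟩
      ext1
      simp only [consBlock, List.cons.injEq, and_true]
      omega

theorem sum_blocks_prod_succ {R : Type*} [CommSemiring R] (f : ℕ → R) (n : ℕ) :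
    ∑ c : Composition (n + 1), (c.blocks.map f).prod
      = ∑ i ∈ range (n + 1), f (n + 1 - i) * ∑ c : Composition i, (c.blocks.map f).prod := by
  rw [← (Fintype.sum_bijective _ (consBlock_bijective n) _ _ fun _ => rfl),
    ← univ_sigma_univ, sum_sigma, ← Fin.sum_univ_eq_sum_range]
  simp only [consBlock, List.map_cons, List.prod_cons, mul_sum]

end Composition

theorem hcomp_succ (n : ℕ) :
    hcomp (n + 1) = ∑ i ∈ range (n + 1), (n + 2 - i) * hcomp i := by
  rw [hcomp, Composition.sum_blocks_prod_succ]
  refine sum_congr rfl fun i hi => ?_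
  rw [mem_range] at hi
  rw [hcomp, show n + 1 - i + 1 = n + 2 - i by omega]

theorem hcomp_succ_succ (n : ℕ) :
    hcomp (n + 2) = 3 * hcomp (n + 1) + ∑ i ∈ range (n + 1), hcomp i := by
  have hweights :
      ∀ i ∈ range (n + 1), (n + 3 - i) * hcomp i = (n + 2 - i) * hcomp i + hcomp i := by
    intro i hi
    rw [mem_range] at hi
    rw [show n + 3 - i = n + 2 - i + 1 by omega, add_one_mul]
  rw [hcomp_succ (n + 1), sum_range_succ, sum_congr rfl hweights, sum_add_distrib, ← hcomp_succ,
    show n + 1 + 2 - (n + 1) = 2 by omega]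
  omega

/-- Linear recurrence (OEIS A003480): for `k ≥ 3`,
`hcomp k + 2·hcomp (k−2) = 4·hcomp (k−1)`. -/
theorem stmt_14 (k : ℕ) (hk : 3 ≤ k) :
    hcomp k + 2 * hcomp (k - 2) = 4 * hcomp (k - 1) := by
  obtain ⟨n, rfl⟩ : ∃ n, k = n + 3 := ⟨k - 3, by omega⟩
  have h₁ : hcomp (n + 3) = 3 * hcomp (n + 2) + ∑ i ∈ range (n + 2), hcomp i :=
    hcomp_succ_succ (n + 1)
  have h₂ := hcomp_succ_succ n
  rw [sum_range_succ] at h₁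
  rw [show n + 3 - 2 = n + 1 by omega, show n + 3 - 1 = n + 2 by omega]
  omega
end

section
/- Let L be a list of positive natural numbers with sum n and length m ≥ 1. Then Π_{k ∈ L} (k + 1) ≥ 2^(m − 1) · (n − m + 2). -/
lemma len_le_sum_aux (L : List ℕ) (hL : ∀ x ∈ L, 0 < x) : L.length ≤ L.sum := by
  induction L with
  | nil => simp
  | cons a t ih =>
    have ha := hL a (by simp)
    have := ih (fun x hx => hL x (List.mem_cons_of_mem _ hx))
    simp only [List.length_cons, List.sum_cons]
    omega

lemma prod_aux (L : List ℕ) (hL : ∀ x ∈ L, 0 < x) (hne : L ≠ []) :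
    (L.map (· + 1)).prod ≥ 2 ^ (L.length - 1) * (L.sum - L.length + 2) := by
  induction L with
  | nil => exact absurd rfl hne
  | cons a t ih =>
    have ha : 0 < a := hL a (by simp)
    have ht' : ∀ x ∈ t, 0 < x := fun x hx => hL x (List.mem_cons_of_mem _ hx)
    by_cases ht : t = []
    · subst ht; simp; omega
    · have IH := ih ht' ht
      have hl : 1 ≤ t.length := by
        cases t with
        | nil => exact absurd rfl ht
        | cons b s => simp
      have hsl : t.length ≤ t.sum := len_le_sum_aux t ht'
      simp only [List.map_cons, List.prod_cons, List.length_cons, List.sum_cons]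
      have h2 : 2 ^ (t.length + 1 - 1) = 2 * 2 ^ (t.length - 1) := by
        rw [Nat.add_sub_cancel, ← pow_succ']
        congr 1
        omega
      rw [h2]
      set u := t.sum - t.length with hu
      have hrw : a + t.sum - (t.length + 1) + 2 = a + u + 1 := by omega
      have hrw2 : t.sum - t.length + 2 = u + 2 := by omega
      rw [hrw]
      rw [hrw2] at IH
      calc (a + 1) * (t.map (· + 1)).prod
          ≥ (a + 1) * (2 ^ (t.length - 1) * (u + 2)) :=
            Nat.mul_le_mul_left _ IH
        _ ≥ 2 * 2 ^ (t.length - 1) * (a + u + 1) := by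
            have key : (a + 1) * (u + 2) ≥ 2 * (a + u + 1) := by nlinarith
            calc (a + 1) * (2 ^ (t.length - 1) * (u + 2))
                = 2 ^ (t.length - 1) * ((a + 1) * (u + 2)) := by ring
              _ ≥ 2 ^ (t.length - 1) * (2 * (a + u + 1)) :=
                  Nat.mul_le_mul_left _ key
              _ = 2 * 2 ^ (t.length - 1) * (a + u + 1) := by ring

/-- For a list `L` of positive naturals with sum `n` and length `m ≥ 1`,
`∏_{k ∈ L} (k + 1) ≥ 2^(m−1) · (n − m + 2)`. -/
theorem stmt_17 (L : List ℕ) (hL : ∀ x ∈ L, 0 < x) (n m : ℕ)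
    (hn : L.sum = n) (hm : L.length = m) (hm1 : 1 ≤ m) :
    (L.map (· + 1)).prod ≥ 2 ^ (m - 1) * (n - m + 2) := by
  subst hn hm
  have hne : L ≠ [] := by
    intro h; subst h; simp at hm1
  exact prod_aux L hL hne
end
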